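/- arXiv:1606.08024 — 4 statements merged into one kernel-verified Lean document; each statement's English description precedes it below -/
import Mathlib

section
/- Let V be a countable set and let μ be a downward FKG probability measure on Ω = {0,1}^V. Let (P_j)_{j∈J} be a partition of V into pairwise disjoint nonempty subsets indexed by a countable set J, and define the measurable map Y : {0,1}^V → {0,1}^J by Y(η)(j) = sup_{i ∈ P_j} η(i) (i.e., Y(η)(j) = 1 iff η(i) = 1 for some i ∈ P_j). Then the pushforward measure of μ under Y is a downward FKG probability measure on {0,1}^J. (Lemma 2.2 of the paper.) -/
open MeasureTheory ProbabilityTheory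

attribute [local instance] Classical.propDecidable

/-- A measurable, increasing (upward-closed) event on `{0,1}^V`. -/
def IncreasingEvent {V : Type*} (B : Set (V → Bool)) : Prop :=
  MeasurableSet B ∧ ∀ ⦃ξ η : V → Bool⦄, ξ ≤ η → ξ ∈ B → η ∈ B

/-- A measure on `{0,1}^V` is positively associated if increasing events are
positively correlated. -/
def PositivelyAssociated {V : Type*} (μ : Measure (V → Bool)) : Prop :=
  ∀ B₁ B₂ : Set (V → Bool), IncreasingEvent B₁ → IncreasingEvent B₂ →
    μ B₁ * μ B₂ ≤ μ (B₁ ∩ B₂)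

/-- The event that the configuration is `0` everywhere on `Λ`. -/
def ZeroOn {V : Type*} (Λ : Set V) : Set (V → Bool) :=
  {η | ∀ x ∈ Λ, η x = false}

/-- Downward FKG: conditioned on being `0` on any finite set (of positive
probability), the measure is positively associated. -/
def DownwardFKG {V : Type*} (μ : Measure (V → Bool)) : Prop :=
  ∀ Λ : Finset V, 0 < μ (ZeroOn (Λ : Set V)) →
    PositivelyAssociated (μ[|ZeroOn (Λ : Set V)])

/-- `Y(η)(j) = 1` iff `η(i) = 1` for some `i ∈ P j`. -/
noncomputable def blockMax {V J : Type*} (P : J → Set V) (η : V → Bool) (j : J) : Bool :=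
  decide (∃ i ∈ P j, η i = true)

/-- `ZeroOn` of any subset of a countable index set is measurable. -/
lemma measurableSet_zeroOn {V : Type*} [Countable V] (S : Set V) :
    MeasurableSet (ZeroOn S) := by
  have : ZeroOn S = ⋂ x ∈ S, {η : V → Bool | η x = false} := by
    ext η; simp [ZeroOn]
  rw [this]
  refine MeasurableSet.biInter (Set.to_countable S) (fun x _ => ?_)
  have : {η : V → Bool | η x = false} = (fun η : V → Bool => η x) ⁻¹' {false} := rfl
  rw [this]
  exact (measurable_pi_apply x) (MeasurableSet.singleton false)

lemma zeroOn_antitone {V : Type*} {S T : Set V} (h : S ⊆ T) : ZeroOn T ⊆ ZeroOn S :=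
  fun η hη x hx => hη x (h hx)

/-- Positive association conditioned on `ZeroOn S` for an arbitrary (countable) `S`. -/
lemma posAssoc_cond_zeroOn {V : Type*} [Countable V] (μ : Measure (V → Bool))
    [IsProbabilityMeasure μ] (hμ : DownwardFKG μ) (S : Set V)
    (hS : 0 < μ (ZeroOn S)) : PositivelyAssociated (μ[|ZeroOn S]) := by
  obtain ⟨enc, henc⟩ := (countable_iff_exists_injective V).1 ‹Countable V›
  -- finite approximations of S
  have hfin : ∀ n : ℕ, ({x ∈ S | enc x < n} : Set V).Finite := by
    intro n
    apply Set.Finite.of_finite_image (f := enc) _ (henc.injOn)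
    exact (Set.finite_Iio n).subset (by rintro m ⟨x, ⟨_, hx⟩, rfl⟩; exact hx)
  let Λ : ℕ → Finset V := fun n => (hfin n).toFinset
  have hΛS : ∀ n, (Λ n : Set V) ⊆ S := by
    intro n x hx
    simp only [Λ, Set.Finite.coe_toFinset, Set.mem_setOf_eq] at hx
    exact hx.1
  have hmono : Monotone fun n => ((Λ n : Set V)) := by
    intro m n hmn x hx
    simp only [Λ, Set.Finite.coe_toFinset, Set.mem_setOf_eq] at hx ⊢
    exact ⟨hx.1, lt_of_lt_of_le hx.2 (Nat.cast_le.mpr hmn)⟩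
  have hiInter : (⋂ n, ZeroOn (Λ n : Set V)) = ZeroOn S := by
    apply Set.Subset.antisymm
    · intro η hη x hx
      have : x ∈ (Λ (enc x + 1) : Set V) := by
        simp only [Λ, Set.Finite.coe_toFinset, Set.mem_setOf_eq]
        exact ⟨hx, Nat.lt_succ_self _⟩
      exact Set.mem_iInter.1 hη (enc x + 1) x this
    · exact Set.subset_iInter fun n => zeroOn_antitone (hΛS n)
  have hpos : ∀ n, 0 < μ (ZeroOn (Λ n : Set V)) := fun n =>
    lt_of_lt_of_le hS (measure_mono (zeroOn_antitone (hΛS n)))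
  -- now the limit argument
  intro B₁ B₂ hB₁ hB₂
  have hZ : ∀ n, MeasurableSet (ZeroOn (Λ n : Set V)) := fun n => measurableSet_zeroOn _
  have hanti : Antitone fun n => ZeroOn (Λ n : Set V) := fun m n h => zeroOn_antitone (hmono h)
  have htend : ∀ (B : Set (V → Bool)), MeasurableSet B →
      Filter.Tendsto (fun n => μ (ZeroOn (Λ n : Set V) ∩ B)) Filter.atTop
        (nhds (μ (ZeroOn S ∩ B))) := by
    intro B hB
    have := tendsto_measure_iInter_atTop (μ := μ)
      (s := fun n => ZeroOn (Λ n : Set V) ∩ B)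
      (fun n => ((hZ n).inter hB).nullMeasurableSet)
      (fun m n h => Set.inter_subset_inter_left _ (hanti h))
      ⟨0, measure_ne_top _ _⟩
    rwa [show (⋂ n, ZeroOn (Λ n : Set V) ∩ B) = ZeroOn S ∩ B by
      rw [← Set.iInter_inter, hiInter]] at this
  have htendZ : Filter.Tendsto (fun n => μ (ZeroOn (Λ n : Set V))) Filter.atTop
      (nhds (μ (ZeroOn S))) := by
    have := htend Set.univ MeasurableSet.univ
    simpa using this
  have htendInv : Filter.Tendsto (fun n => (μ (ZeroOn (Λ n : Set V)))⁻¹) Filter.atTop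
      (nhds ((μ (ZeroOn S))⁻¹)) := htendZ.inv
  have hinv_ne_top : (μ (ZeroOn S))⁻¹ ≠ ⊤ := by
    simp [ENNReal.inv_ne_top]; exact hS.ne'
  -- the inequality for each n
  have hineq : ∀ n,
      ((μ (ZeroOn (Λ n : Set V)))⁻¹ * μ (ZeroOn (Λ n : Set V) ∩ B₁)) *
        ((μ (ZeroOn (Λ n : Set V)))⁻¹ * μ (ZeroOn (Λ n : Set V) ∩ B₂)) ≤
      (μ (ZeroOn (Λ n : Set V)))⁻¹ * μ (ZeroOn (Λ n : Set V) ∩ (B₁ ∩ B₂)) := by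
    intro n
    have h := hμ (Λ n) (hpos n) B₁ B₂ hB₁ hB₂
    rwa [cond_apply (hZ n), cond_apply (hZ n), cond_apply (hZ n)] at h
  -- take limits
  rw [cond_apply (measurableSet_zeroOn S), cond_apply (measurableSet_zeroOn S),
    cond_apply (measurableSet_zeroOn S)]
  have hmul : ∀ (B : Set (V → Bool)), MeasurableSet B →
      Filter.Tendsto (fun n => (μ (ZeroOn (Λ n : Set V)))⁻¹ * μ (ZeroOn (Λ n : Set V) ∩ B))
        Filter.atTop (nhds ((μ (ZeroOn S))⁻¹ * μ (ZeroOn S ∩ B))) := by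
    intro B hB
    exact ENNReal.Tendsto.mul htendInv (Or.inr (measure_ne_top _ _)) (htend B hB)
      (Or.inr hinv_ne_top)
  refine le_of_tendsto_of_tendsto'
    (ENNReal.Tendsto.mul (hmul B₁ hB₁.1) (Or.inr ?_) (hmul B₂ hB₂.1) (Or.inr ?_))
    (hmul (B₁ ∩ B₂) (hB₁.1.inter hB₂.1)) hineq
  · exact ENNReal.mul_ne_top hinv_ne_top (measure_ne_top _ _)
  · exact ENNReal.mul_ne_top hinv_ne_top (measure_ne_top _ _)

lemma measurable_blockMax {V J : Type*} [Countable V] (P : J → Set V) :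
    Measurable fun η => blockMax P η := by
  apply measurable_pi_lambda
  intro j
  have : (fun η : V → Bool => blockMax P η j) ⁻¹' {true} =
      ⋃ i ∈ P j, {η : V → Bool | η i = true} := by
    ext η; simp [blockMax]
  apply measurable_to_countable'
  intro b
  cases b
  · have h2 : (fun η : V → Bool => blockMax P η j) ⁻¹' {false} =
        ((fun η : V → Bool => blockMax P η j) ⁻¹' {true})ᶜ := by
      ext η
      simp only [Set.mem_preimage, Set.mem_singleton_iff, Set.mem_compl_iff]
      cases blockMax P η j <;> simp
    rw [h2, this]
    refine (MeasurableSet.biUnion (Set.to_countable (P j)) (fun i _ => ?_)).compl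
    have h3 : {η : V → Bool | η i = true} = (fun η : V → Bool => η i) ⁻¹' {true} := rfl
    rw [h3]; exact (measurable_pi_apply i) (MeasurableSet.singleton true)
  · rw [this]
    refine MeasurableSet.biUnion (Set.to_countable (P j)) (fun i _ => ?_)
    have h3 : {η : V → Bool | η i = true} = (fun η : V → Bool => η i) ⁻¹' {true} := rfl
    rw [h3]; exact (measurable_pi_apply i) (MeasurableSet.singleton true)

lemma monotone_blockMax {V J : Type*} (P : J → Set V) :
    Monotone fun η => blockMax P η := by
  intro ξ η h j
  rw [Bool.le_iff_imp]
  intro hξ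
  simp only [blockMax, decide_eq_true_eq] at hξ ⊢
  obtain ⟨i, hi, hit⟩ := hξ
  exact ⟨i, hi, Bool.le_iff_imp.1 (h i) hit⟩

lemma blockMax_preimage_zeroOn {V J : Type*} (P : J → Set V) (Λ : Set J) :
    (fun η => blockMax P η) ⁻¹' ZeroOn Λ = ZeroOn (⋃ j ∈ Λ, P j) := by
  ext η
  simp only [Set.mem_preimage, ZeroOn, Set.mem_setOf_eq, Set.mem_iUnion, blockMax]
  constructor
  · rintro h x ⟨j, hj, hx⟩
    have := h j hj
    simp only [decide_eq_false_iff_not, not_exists, not_and] at this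
    simpa using this x hx
  · intro h j hj
    simp only [decide_eq_false_iff_not, not_exists]
    rintro x ⟨hx, hxt⟩
    exact absurd (h x ⟨j, hj, hx⟩) (by simp [hxt])

/-- Lemma 2.2: the image of a downward FKG measure under taking maxima over the
blocks of a partition is again a downward FKG probability measure. -/
theorem dfkg_of_partition_max {V J : Type*} [Countable V] [Countable J]
    (μ : Measure (V → Bool)) [IsProbabilityMeasure μ] (hμ : DownwardFKG μ)
    (P : J → Set V)
    (hdisj : Pairwise (Function.onFun Disjoint P))
    (hne : ∀ j, (P j).Nonempty)
    (hcover : (⋃ j, P j) = Set.univ) :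
    IsProbabilityMeasure (μ.map (fun η => blockMax P η)) ∧
      DownwardFKG (μ.map (fun η => blockMax P η)) := by
  have hY : Measurable fun η => blockMax P η := measurable_blockMax P
  refine ⟨Measure.isProbabilityMeasure_map hY.aemeasurable, ?_⟩
  intro Λ hpos
  set S : Set V := ⋃ j ∈ (Λ : Set J), P j with hSdef
  have hpre : (fun η => blockMax P η) ⁻¹' ZeroOn (Λ : Set J) = ZeroOn S :=
    blockMax_preimage_zeroOn P _
  rw [Measure.map_apply hY (measurableSet_zeroOn _), hpre] at hpos
  intro B₁ B₂ hB₁ hB₂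
  -- transfer to V
  have key : ∀ (B : Set (J → Bool)), MeasurableSet B →
      (μ.map (fun η => blockMax P η))[|ZeroOn (Λ : Set J)] B =
      (μ[|ZeroOn S]) ((fun η => blockMax P η) ⁻¹' B) := by
    intro B hB
    rw [cond_apply (measurableSet_zeroOn _), cond_apply (measurableSet_zeroOn _),
      Measure.map_apply hY (measurableSet_zeroOn _),
      Measure.map_apply hY ((measurableSet_zeroOn _).inter hB), hpre,
      Set.preimage_inter, hpre]
  have hPA := posAssoc_cond_zeroOn μ hμ S hpos
  have hinc : ∀ (B : Set (J → Bool)), IncreasingEvent B →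
      IncreasingEvent ((fun η => blockMax P η) ⁻¹' B) := by
    intro B hB
    exact ⟨hY hB.1, fun ξ η hle hξ => hB.2 (monotone_blockMax P hle) hξ⟩
  rw [key B₁ hB₁.1, key B₂ hB₂.1, key (B₁ ∩ B₂) (hB₁.1.inter hB₂.1), Set.preimage_inter]
  exact hPA _ _ (hinc B₁ hB₁) (hinc B₂ hB₂)
end

section
/- Let (Ω, ℱ, P) be a probability space and let (D_i)_{i≥1} be random variables taking values in {1,2,3,…} ∪ {∞}. Suppose there exist ε > 0 and C, c > 0 such that for every i ≥ 1 and every (t_1,…,t_{i−1}) ∈ {1,2,3,…}^{i−1} with P(D_1 = t_1, …, D_{i−1} = t_{i−1}) > 0, one has P(D_i = ∞ | D_1 = t_1, …, D_{i−1} = t_{i−1}) ≥ ε, and P(s ≤ D_i < ∞ | D_1 = t_1, …, D_{i−1} = t_{i−1}) ≤ C e^{−cs} for all s ≥ 1. Then there exist C' > 0 and c' > 0 such that for all n ≥ 1, P(there exists k ≥ 1 with D_1, …, D_k all finite and D_1 + ⋯ + D_k ≥ n) ≤ C' e^{−c' n}. (This is the abstract renewal estimate underlying the proof of Lemma 2.5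 of the paper.) -/
/-!
Let `w = finitePow q` (`w(d) = q ^ d` for finite `d`, `w(∞) = 0`) with `q = e^λ`. For `λ` small,
uniformly in the past, the conditional mean of `w(D_i)` is at most `ρ = 1 - ε/2`: the atom at `∞`
contributes nothing, the finite part has mass at most `1 - ε`, and the exponential tail keeps large
values from mattering. Conditioning on the past one variable at a time gives
`E ∏_{j<k} w(D_j) ≤ ρ ^ k`. On the event in question some such product is at least `q ^ n`, so
Markov's inequality applied to their sum over `k` bounds its probability by
`q ^ (-n) / (1 - ρ) = (2/ε) e^{-λn}`.
-/

open MeasureTheory ProbabilityTheory Filter Topology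
open scoped ENNReal

noncomputable def finitePow (q : ℝ≥0∞) (d : ℕ∞) : ℝ≥0∞ :=
  if d = ⊤ then 0 else q ^ d.toNat

@[simp] lemma finitePow_top (q : ℝ≥0∞) : finitePow q ⊤ = 0 := if_pos rfl

@[simp] lemma finitePow_coe (q : ℝ≥0∞) (s : ℕ) : finitePow q s = q ^ s := by
  simp [finitePow]

lemma finitePow_le_indicator_add_tsum {q : ℝ≥0∞} (hq : 1 ≤ q) (m : ℕ) (d : ℕ∞) :
    finitePow q d ≤ {x : ℕ∞ | x ≠ ⊤}.indicator (fun _ ↦ q ^ m) d +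
      ∑' i, {x : ℕ∞ | x = ↑(i + m)}.indicator (fun _ ↦ q ^ (i + m)) d := by
  induction d using ENat.recTopCoe with
  | top => simp
  | coe s =>
    rcases le_or_gt s m with hsm | hms
    · simpa using le_add_right (pow_le_pow_right₀ hq hsm)
    · obtain ⟨i, rfl⟩ := Nat.exists_eq_add_of_le' hms.le
      refine le_add_left (le_trans ?_ (ENNReal.le_tsum i))
      simp [-Nat.cast_add]

lemma lintegral_finitePow_le {Ω : Type*} [MeasurableSpace Ω] (μ : Measure Ω) {X : Ω → ℕ∞}
    (hX : Measurable X) {q : ℝ≥0∞} (hq : 1 ≤ q) (m : ℕ) :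
    ∫⁻ ω, finitePow q (X ω) ∂μ ≤
      q ^ m * μ {ω | X ω ≠ ⊤} + ∑' i, q ^ (i + m) * μ {ω | X ω = ↑(i + m)} := by
  have hset : ∀ S : Set ℕ∞, MeasurableSet (X ⁻¹' S) := fun S ↦ hX (.of_discrete)
  calc ∫⁻ ω, finitePow q (X ω) ∂μ
      ≤ ∫⁻ ω, ((X ⁻¹' {x | x ≠ ⊤}).indicator (fun _ ↦ q ^ m) ω +
          ∑' i, (X ⁻¹' {x | x = ↑(i + m)}).indicator (fun _ ↦ q ^ (i + m)) ω) ∂μ :=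
        lintegral_mono fun ω ↦ finitePow_le_indicator_add_tsum hq m (X ω)
    _ = _ := by
        rw [lintegral_add_left (measurable_const.indicator (hset _)),
          lintegral_tsum fun i ↦ (measurable_const.indicator (hset _)).aemeasurable,
          lintegral_indicator_const (hset _)]
        simp_rw [lintegral_indicator_const (hset _)]
        rfl

lemma lintegral_finitePow_le_of_tail {Ω : Type*} [MeasurableSpace Ω] (μ : Measure Ω)
    {X : Ω → ℕ∞} (hX : Measurable X) {q a r₀ r : ℝ≥0∞} (hq : 1 ≤ q) (hqr : q * r₀ ≤ r)
    {m : ℕ} (hm : 1 ≤ m)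
    (htail : ∀ s : ℕ, 1 ≤ s → μ {ω | (s : ℕ∞) ≤ X ω ∧ X ω ≠ ⊤} ≤ a * r₀ ^ s) :
    ∫⁻ ω, finitePow q (X ω) ∂μ ≤ q ^ m * μ {ω | X ω ≠ ⊤} + a * ∑' i, r ^ (i + m) := by
  refine (lintegral_finitePow_le μ hX hq m).trans (add_le_add_right ?_ _)
  rw [← ENNReal.tsum_mul_left]
  refine ENNReal.tsum_le_tsum fun i ↦ ?_
  have hfiber : μ {ω | X ω = ↑(i + m)} ≤ a * r₀ ^ (i + m) :=
    (measure_mono fun ω (hω : X ω = _) ↦ by simp [hω]).trans (htail _ (by omega))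
  calc q ^ (i + m) * μ {ω | X ω = ↑(i + m)} ≤ q ^ (i + m) * (a * r₀ ^ (i + m)) := by gcongr
    _ = a * (q * r₀) ^ (i + m) := by ring
    _ ≤ a * r ^ (i + m) := by gcongr

lemma exists_mul_tsum_pow_add_lt {a r : ℝ≥0∞} (ha : a ≠ ⊤) (hr : r < 1) {δ : ℝ≥0∞} (hδ : 0 < δ) :
    ∃ m : ℕ, 1 ≤ m ∧ a * ∑' i, r ^ (i + m) < δ := by
  have hsum : ∑' i, a * r ^ i ≠ ⊤ := by
    rw [ENNReal.tsum_mul_left, ENNReal.tsum_geometric]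
    exact ENNReal.mul_ne_top ha (ENNReal.inv_ne_top.2 (tsub_pos_of_lt hr).ne')
  obtain ⟨m, hm⟩ := ((ENNReal.tendsto_sum_nat_add _ hsum).eventually (gt_mem_nhds hδ)).and
    (eventually_ge_atTop 1) |>.exists
  exact ⟨m, hm.2, by simpa [ENNReal.tsum_mul_left] using hm.1⟩

lemma exists_pos_le_exp_pow_lt (m : ℕ) {c η : ℝ} (hc : 0 < c) (hη : 0 < η) :
    ∃ l : ℝ, 0 < l ∧ l ≤ c ∧ Real.exp l ^ m < 1 + η := by
  have hlim : Tendsto (fun l ↦ Real.exp l ^ m) (𝓝[>] 0) (𝓝 1) := by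
    simpa using ((by fun_prop : Continuous fun l ↦ Real.exp l ^ m).tendsto 0).mono_left
      nhdsWithin_le_nhds
  obtain ⟨l, hl, hlc, hlm⟩ := ((eventually_mem_nhdsWithin (s := Set.Ioi (0 : ℝ)) (a := 0)).and <|
    ((eventually_le_nhds hc).filter_mono nhdsWithin_le_nhds).and <|
    hlim.eventually (gt_mem_nhds (lt_add_of_pos_right 1 hη))).exists
  exact ⟨l, hl, hlc, hlm⟩

lemma exists_lintegral_finitePow_le {Ω : Type*} [MeasurableSpace Ω] {ε : ℝ} (hε : 0 < ε)
    (C : ℝ) {c : ℝ} (hc : 0 < c) :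
    ∃ l : ℝ, 0 < l ∧ ∀ (Q : Measure Ω) [IsProbabilityMeasure Q] (X : Ω → ℕ∞), Measurable X →
      ENNReal.ofReal ε ≤ Q {ω | X ω = ⊤} →
      (∀ s : ℕ, 1 ≤ s →
        Q {ω | (s : ℕ∞) ≤ X ω ∧ X ω ≠ ⊤} ≤ ENNReal.ofReal (C * Real.exp (-c * s))) →
      ∫⁻ ω, finitePow (ENNReal.ofReal (Real.exp l)) (X ω) ∂Q ≤ ENNReal.ofReal (1 - ε / 2) := by
  have hr : ENNReal.ofReal (Real.exp (-(c / 2))) < 1 := by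
    rw [ENNReal.ofReal_lt_one, Real.exp_lt_one_iff]; linarith
  obtain ⟨m, hm, hmtail⟩ := exists_mul_tsum_pow_add_lt ENNReal.ofReal_ne_top hr
    (ENNReal.ofReal_pos.2 (by positivity : 0 < ε / 4))
  obtain ⟨l, hl, hlc, hlm⟩ := exists_pos_le_exp_pow_lt m (half_pos hc) (by positivity : 0 < ε / 4)
  refine ⟨l, hl, fun Q _ X hX htop htail ↦ ?_⟩
  -- Values below `m` weigh at most `q ^ m ≤ 1 + ε/4` on mass `≤ 1 - ε`; values from `m` on
  -- contribute at most `ε/4`; and `(1 + ε/4)(1 - ε) + ε/4 ≤ 1 - ε/2`.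
  have hq : 1 ≤ ENNReal.ofReal (Real.exp l) := by
    rw [ENNReal.one_le_ofReal]; exact Real.one_le_exp hl.le
  have hqr : ENNReal.ofReal (Real.exp l) * ENNReal.ofReal (Real.exp (-c)) ≤
      ENNReal.ofReal (Real.exp (-(c / 2))) := by
    rw [← ENNReal.ofReal_mul (Real.exp_pos _).le, ← Real.exp_add]
    exact ENNReal.ofReal_le_ofReal (Real.exp_le_exp.2 (by linarith))
  have htail' : ∀ s : ℕ, 1 ≤ s → Q {ω | (s : ℕ∞) ≤ X ω ∧ X ω ≠ ⊤} ≤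
      ENNReal.ofReal C * ENNReal.ofReal (Real.exp (-c)) ^ s := fun s hs ↦ by
    rw [← ENNReal.ofReal_pow (Real.exp_pos _).le, ← ENNReal.ofReal_mul' (by positivity),
      ← Real.exp_nat_mul, mul_comm (s : ℝ)]
    exact htail s hs
  have hε1 : ε ≤ 1 := ENNReal.ofReal_le_one.1 (htop.trans prob_le_one)
  have hfin : Q {ω | X ω ≠ ⊤} ≤ ENNReal.ofReal (1 - ε) := by
    rw [ENNReal.ofReal_sub _ hε.le, ENNReal.ofReal_one]
    calc Q {ω | X ω ≠ ⊤} = 1 - Q {ω | X ω = ⊤} :=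
          prob_compl_eq_one_sub (hX (measurableSet_singleton ⊤))
      _ ≤ 1 - ENNReal.ofReal ε := tsub_le_tsub_left htop 1
  calc ∫⁻ ω, finitePow (ENNReal.ofReal (Real.exp l)) (X ω) ∂Q
      ≤ ENNReal.ofReal (Real.exp l) ^ m * Q {ω | X ω ≠ ⊤} +
          ENNReal.ofReal C * ∑' i, ENNReal.ofReal (Real.exp (-(c / 2))) ^ (i + m) :=
        lintegral_finitePow_le_of_tail Q hX hq hqr hm htail'
    _ ≤ ENNReal.ofReal (1 + ε / 4) * ENNReal.ofReal (1 - ε) + ENNReal.ofReal (ε / 4) := by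
        rw [← ENNReal.ofReal_pow (Real.exp_pos _).le]
        gcongr
    _ = ENNReal.ofReal ((1 + ε / 4) * (1 - ε) + ε / 4) := by
        rw [← ENNReal.ofReal_mul (by positivity),
          ← ENNReal.ofReal_add (by nlinarith) (by positivity)]
    _ ≤ ENNReal.ofReal (1 - ε / 2) := ENNReal.ofReal_le_ofReal (by nlinarith)

lemma setLIntegral_eq_measure_mul_lintegral_cond {Ω : Type*} [MeasurableSpace Ω] (μ : Measure Ω)
    {s : Set Ω} (hs : μ s ≠ ⊤) (f : Ω → ℝ≥0∞) :
    ∫⁻ ω in s, f ω ∂μ = μ s * ∫⁻ ω, f ω ∂μ[|s] := by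
  rcases eq_or_ne (μ s) 0 with h | h
  · simp [Measure.restrict_eq_zero.2 h, h]
  · rw [ProbabilityTheory.cond, lintegral_smul_measure, smul_eq_mul, ← mul_assoc,
      ENNReal.mul_inv_cancel h hs, one_mul]

lemma lintegral_comp_mul_le_of_cond_le {Ω β : Type*} [MeasurableSpace Ω] [MeasurableSpace β]
    [Countable β] [MeasurableSingletonClass β] (μ : Measure Ω) [IsFiniteMeasure μ] {Y : Ω → β}
    (hY : Measurable Y) {f : Ω → ℝ≥0∞} (hf : Measurable f) (g : β → ℝ≥0∞) {ρ : ℝ≥0∞}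
    (hcond : ∀ b, g b ≠ 0 → μ (Y ⁻¹' {b}) ≠ 0 → ∫⁻ ω, f ω ∂μ[|Y ⁻¹' {b}] ≤ ρ) :
    ∫⁻ ω, g (Y ω) * f ω ∂μ ≤ ρ * ∫⁻ ω, g (Y ω) ∂μ := by
  have hfib : ∀ b, MeasurableSet (Y ⁻¹' {b}) := fun b ↦ hY (measurableSet_singleton b)
  have hsplit : ∀ F : Ω → ℝ≥0∞, ∫⁻ ω, F ω ∂μ = ∑' b, ∫⁻ ω in Y ⁻¹' {b}, F ω ∂μ := fun F ↦ by
    rw [← lintegral_iUnion hfib (pairwise_disjoint_fiber Y), ← Set.preimage_iUnion,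
      Set.iUnion_of_singleton, Set.preimage_univ, Measure.restrict_univ]
  rw [hsplit, hsplit, ← ENNReal.tsum_mul_left]
  refine ENNReal.tsum_le_tsum fun b ↦ ?_
  rw [setLIntegral_congr_fun (hfib b) (g := fun ω ↦ g b * f ω)
      fun ω (hω : Y ω = b) ↦ by simp only [hω],
    setLIntegral_congr_fun (hfib b) (f := fun ω ↦ g (Y ω)) (g := fun _ ↦ g b)
      fun ω (hω : Y ω = b) ↦ by simp only [hω],
    lintegral_const_mul _ hf, setLIntegral_const,
    setLIntegral_eq_measure_mul_lintegral_cond μ (measure_ne_top μ _)]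
  by_cases hb : g b = 0 ∨ μ (Y ⁻¹' {b}) = 0
  · rcases hb with hb | hb <;> simp [hb]
  · obtain ⟨hgb, hμb⟩ := not_or.1 hb
    calc g b * (μ (Y ⁻¹' {b}) * ∫⁻ ω, f ω ∂μ[|Y ⁻¹' {b}]) ≤ g b * (μ (Y ⁻¹' {b}) * ρ) := by
          gcongr; exact hcond b hgb hμb
      _ = ρ * (g b * μ (Y ⁻¹' {b})) := by ring

lemma lintegral_prod_range_le_pow {Ω : Type*} [MeasurableSpace Ω] (μ : Measure Ω)
    [IsProbabilityMeasure μ] {D : ℕ → Ω → ℕ∞} (hD : ∀ i, Measurable (D i)) (w : ℕ∞ → ℝ≥0∞)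
    {ρ : ℝ≥0∞}
    (hcond : ∀ (k : ℕ) (b : Fin k → ℕ∞), (∀ j, w (b j) ≠ 0) →
      μ {ω | ∀ j : Fin k, D j ω = b j} ≠ 0 →
      ∫⁻ ω, w (D k ω) ∂μ[|{ω | ∀ j : Fin k, D j ω = b j}] ≤ ρ)
    (k : ℕ) : ∫⁻ ω, ∏ j ∈ Finset.range k, w (D j ω) ∂μ ≤ ρ ^ k := by
  simp_rw [← Fin.prod_univ_eq_prod_range]
  induction k with
  | zero => simp
  | succ k ih =>
    set Y : Ω → Fin k → ℕ∞ := fun ω j ↦ D j ω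
    have hfiber : ∀ b, Y ⁻¹' {b} = {ω | ∀ j : Fin k, D j ω = b j} :=
      fun b ↦ Set.ext fun ω ↦ funext_iff
    simp_rw [Fin.prod_univ_castSucc, Fin.val_castSucc, Fin.val_last]
    calc ∫⁻ ω, (∏ j : Fin k, w (D j ω)) * w (D k ω) ∂μ
        ≤ ρ * ∫⁻ ω, ∏ j : Fin k, w (D j ω) ∂μ :=
          lintegral_comp_mul_le_of_cond_le μ (measurable_pi_lambda Y fun j ↦ hD j)
            ((measurable_of_countable w).comp (hD k)) (fun b ↦ ∏ j, w (b j))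
            fun b hb hμb ↦ by
              rw [hfiber] at hμb ⊢
              exact hcond k b (Finset.prod_ne_zero_iff.1 hb · (Finset.mem_univ _)) hμb
      _ ≤ ρ * ρ ^ k := by gcongr
      _ = ρ ^ (k + 1) := (pow_succ' ρ k).symm

lemma pow_le_prod_finitePow {ι : Type*} {q : ℝ≥0∞} (hq : 1 ≤ q) {s : Finset ι} {d : ι → ℕ∞}
    (hfin : ∀ j ∈ s, d j ≠ ⊤) {n : ℕ} (hn : (n : ℕ∞) ≤ ∑ j ∈ s, d j) :
    q ^ n ≤ ∏ j ∈ s, finitePow q (d j) := by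
  have hd : ∀ j ∈ s, d j = ((d j).toNat : ℕ∞) := fun j hj ↦ (ENat.natCast_toNat (hfin j hj)).symm
  rw [Finset.sum_congr rfl hd, ← Nat.cast_sum, Nat.cast_le] at hn
  rw [Finset.prod_congr rfl fun j hj ↦ by rw [hd j hj, finitePow_coe], Finset.prod_pow_eq_pow_sum]
  exact pow_le_pow_right₀ hq hn

lemma measure_exists_sum_ge_le {Ω : Type*} [MeasurableSpace Ω] (μ : Measure Ω)
    {D : ℕ → Ω → ℕ∞} (hD : ∀ i, Measurable (D i)) {q ρ : ℝ≥0∞} (hq : 1 ≤ q) (hq' : q ≠ ⊤)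
    (hmoment : ∀ k, ∫⁻ ω, ∏ j ∈ Finset.range k, finitePow q (D j ω) ∂μ ≤ ρ ^ k) (n : ℕ) :
    μ {ω | ∃ k, (∀ j < k, D j ω ≠ ⊤) ∧ (n : ℕ∞) ≤ ∑ j ∈ Finset.range k, D j ω} ≤
      (1 - ρ)⁻¹ / q ^ n := by
  have hG : ∀ k, Measurable fun ω ↦ ∏ j ∈ Finset.range k, finitePow q (D j ω) := fun k ↦
    Finset.measurable_prod _ fun j _ ↦ (measurable_of_countable (finitePow q)).comp (hD j)
  set S : Ω → ℝ≥0∞ := fun ω ↦ ∑' k, ∏ j ∈ Finset.range k, finitePow q (D j ω)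
  have hsub : {ω | ∃ k, (∀ j < k, D j ω ≠ ⊤) ∧ (n : ℕ∞) ≤ ∑ j ∈ Finset.range k, D j ω} ⊆
      {ω | q ^ n ≤ S ω} := fun ω ⟨k, hfin, hn⟩ ↦
    (pow_le_prod_finitePow hq (fun j hj ↦ hfin j (Finset.mem_range.1 hj)) hn).trans
      (ENNReal.le_tsum k)
  rw [ENNReal.le_div_iff_mul_le (.inl (pow_ne_zero _ (one_pos.trans_le hq).ne'))
    (.inl (ENNReal.pow_ne_top hq')), mul_comm]
  calc q ^ n * μ _ ≤ q ^ n * μ {ω | q ^ n ≤ S ω} := by gcongr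
    _ ≤ ∫⁻ ω, S ω ∂μ := mul_meas_ge_le_lintegral (Measurable.tsum hG) _
    _ ≤ ∑' k, ρ ^ k := by
        rw [lintegral_tsum fun k ↦ (hG k).aemeasurable]
        exact ENNReal.tsum_le_tsum hmoment
    _ = (1 - ρ)⁻¹ := ENNReal.tsum_geometric ρ

/-- Here `D i` is the `(i+1)`-st random variable, so that conditioning on
`D 0, …, D (i-1)` corresponds to conditioning on the first `i` variables. -/
theorem renewal_exponential_estimate_general {Ω : Type*} [MeasurableSpace Ω]
    (P : Measure Ω) [IsProbabilityMeasure P]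
    (D : ℕ → Ω → ℕ∞) (hmeas : ∀ i, Measurable (D i))
    (hge : ∀ i ω, 1 ≤ D i ω)
    (ε C c : ℝ) (hε : 0 < ε) (hc : 0 < c)
    (hinf : ∀ (i : ℕ) (t : Fin i → ℕ), (∀ j, 1 ≤ t j) →
      0 < P {ω | ∀ j : Fin i, D j ω = (t j : ℕ∞)} →
      ENNReal.ofReal ε ≤
        P[|{ω | ∀ j : Fin i, D j ω = (t j : ℕ∞)}] {ω | D i ω = ⊤})
    (htail : ∀ (i : ℕ) (t : Fin i → ℕ), (∀ j, 1 ≤ t j) →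
      0 < P {ω | ∀ j : Fin i, D j ω = (t j : ℕ∞)} →
      ∀ s : ℕ, 1 ≤ s →
        P[|{ω | ∀ j : Fin i, D j ω = (t j : ℕ∞)}]
            {ω | (s : ℕ∞) ≤ D i ω ∧ D i ω ≠ ⊤} ≤
          ENNReal.ofReal (C * Real.exp (-c * s))) :
    ∃ C' c' : ℝ, 0 < C' ∧ 0 < c' ∧ ∀ n : ℕ, 1 ≤ n →
      P {ω | ∃ k : ℕ, 1 ≤ k ∧ (∀ j < k, D j ω ≠ ⊤) ∧
          (n : ℕ∞) ≤ ∑ j ∈ Finset.range k, D j ω} ≤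
        ENNReal.ofReal (C' * Real.exp (-c' * n)) := by
  have hε1 : ε ≤ 1 := by
    have h := hinf 0 Fin.elim0 (fun j ↦ j.elim0) (by simp)
    simp only [IsEmpty.forall_iff, Set.ofPred_true, cond_univ] at h
    exact ENNReal.ofReal_le_one.1 (h.trans prob_le_one)
  obtain ⟨l, hl, hstep⟩ := exists_lintegral_finitePow_le (Ω := Ω) hε C hc
  set q := ENNReal.ofReal (Real.exp l)
  have hq : 1 ≤ q := ENNReal.one_le_ofReal.2 (Real.one_le_exp hl.le)
  have hmoment := lintegral_prod_range_le_pow P hmeas (finitePow q) fun k b hb hPb ↦ by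
    obtain ⟨t, rfl⟩ : ∃ t : Fin k → ℕ, b = fun j ↦ (t j : ℕ∞) :=
      ⟨fun j ↦ (b j).toNat, funext fun j ↦
        (ENat.natCast_toNat fun h ↦ hb j (by rw [h, finitePow_top])).symm⟩
    obtain ⟨ω, hω⟩ := nonempty_of_measure_ne_zero hPb
    have ht : ∀ j, 1 ≤ t j := fun j ↦ by simpa [hω j] using hge j ω
    have := cond_isProbabilityMeasure hPb
    replace hPb := pos_iff_ne_zero.2 hPb
    exact hstep _ (D k) (hmeas k) (hinf k t ht hPb) (htail k t ht hPb)
  refine ⟨2 / ε, l, by positivity, hl, fun n _ ↦ ?_⟩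
  calc P {ω | ∃ k : ℕ, 1 ≤ k ∧ (∀ j < k, D j ω ≠ ⊤) ∧ (n : ℕ∞) ≤ ∑ j ∈ Finset.range k, D j ω}
      ≤ P {ω | ∃ k, (∀ j < k, D j ω ≠ ⊤) ∧ (n : ℕ∞) ≤ ∑ j ∈ Finset.range k, D j ω} :=
        measure_mono fun _ ⟨k, _, hk⟩ ↦ ⟨k, hk⟩
    _ ≤ (1 - ENNReal.ofReal (1 - ε / 2))⁻¹ / q ^ n :=
        measure_exists_sum_ge_le P hmeas hq ENNReal.ofReal_ne_top hmoment n
    _ = ENNReal.ofReal (2 / ε * Real.exp (-l * n)) := by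
        rw [← ENNReal.ofReal_one, ← ENNReal.ofReal_sub _ (by linarith), sub_sub_cancel,
          ← ENNReal.ofReal_inv_of_pos (by positivity), ← ENNReal.ofReal_pow (Real.exp_pos _).le,
          ← ENNReal.ofReal_div_of_pos (by positivity), ← Real.exp_nat_mul, neg_mul, Real.exp_neg]
        congr 1
        field_simp

/-- The abstract renewal estimate underlying Lemma 2.5: if each `D i`, given any
past values, is infinite with probability at least `ε` and has an exponential
conditional tail on its finite part, then the probability that some initial
segment of the `D i` is entirely finite with sum at least `n` decays
exponentially in `n`.

Here `D i` is the `(i+1)`-st random variable, so that conditioning on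
`D 0, …, D (i-1)` corresponds to conditioning on the first `i` variables. -/
theorem renewal_exponential_estimate {Ω : Type*} [MeasurableSpace Ω]
    (P : Measure Ω) [IsProbabilityMeasure P]
    (D : ℕ → Ω → ℕ∞) (hmeas : ∀ i, Measurable (D i))
    (hge : ∀ i ω, 1 ≤ D i ω)
    (ε C c : ℝ) (hε : 0 < ε) (hC : 0 < C) (hc : 0 < c)
    (hinf : ∀ (i : ℕ) (t : Fin i → ℕ), (∀ j, 1 ≤ t j) →
      0 < P {ω | ∀ j : Fin i, D j ω = (t j : ℕ∞)} →
      ENNReal.ofReal ε ≤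
        P[|{ω | ∀ j : Fin i, D j ω = (t j : ℕ∞)}] {ω | D i ω = ⊤})
    (htail : ∀ (i : ℕ) (t : Fin i → ℕ), (∀ j, 1 ≤ t j) →
      0 < P {ω | ∀ j : Fin i, D j ω = (t j : ℕ∞)} →
      ∀ s : ℕ, 1 ≤ s →
        P[|{ω | ∀ j : Fin i, D j ω = (t j : ℕ∞)}]
            {ω | (s : ℕ∞) ≤ D i ω ∧ D i ω ≠ ⊤} ≤
          ENNReal.ofReal (C * Real.exp (-c * s))) :
    ∃ C' c' : ℝ, 0 < C' ∧ 0 < c' ∧ ∀ n : ℕ, 1 ≤ n →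
      P {ω | ∃ k : ℕ, 1 ≤ k ∧ (∀ j < k, D j ω ≠ ⊤) ∧
          (n : ℕ∞) ≤ ∑ j ∈ Finset.range k, D j ω} ≤
        ENNReal.ofReal (C' * Real.exp (-c' * n)) :=
  renewal_exponential_estimate_general P D hmeas hge ε C c hε hc hinf htail
end

section
/- Let G = (V, E) be a connected simple graph whose vertex degrees are all at most D for some finite D, and let o ∈ V. If G has subexponential growth from o, i.e., liminf_{n→∞} |B(o,n)|^{1/n} = 1, then liminf_{n→∞} |{{x,y} ∈ E : d(o,x) = n and d(o,y) = n+1}| / |B(o,n)| = 0. (This is the claim in the paper that condition (1.5) is weaker than subexponential growth (1.4).) -/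
/-!
Write `b n = |B(o,n)|`. Every edge from the sphere of radius `n` to the sphere of radius `n + 1`
ends in the latter, whose vertices have at most `D` neighbours, so there are at most
`D * (b (n + 1) - b n)` such edges. If their ratio to `b n` stayed above `ε` from some `n` on, then
`b` would eventually grow geometrically with ratio `1 + ε / (D + 1)`, and
`liminf (b n) ^ (1 / n)` could not be `1`.
-/

open Filter

namespace SimpleGraph

variable {V : Type*} {G : SimpleGraph V}

lemma exists_adj_dist_le_of_dist_eq_succ {o x : V} {n : ℕ} (hx : G.dist o x = n + 1) :
    ∃ y, G.Adj x y ∧ G.dist o y ≤ n := by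
  rw [dist_comm] at hx
  obtain ⟨p, hp⟩ := exists_walk_of_dist_ne_zero (G := G) (u := x) (v := o) (by omega)
  cases p with
  | nil => simp at hx
  | cons hadj q =>
    refine ⟨_, hadj, ?_⟩
    rw [dist_comm]
    have hq : q.length = n := by simp only [Walk.length_cons] at hp; omega
    exact hq ▸ dist_le q

lemma Connected.finite_setOf_dist_le (hconn : G.Connected)
    (hfin : ∀ v, (G.neighborSet v).Finite) (o : V) (n : ℕ) :
    {x | G.dist o x ≤ n}.Finite := by
  induction n with
  | zero => simp [hconn.dist_eq_zero_iff]
  | succ n ih =>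
    refine (ih.union (ih.biUnion fun y _ => hfin y)).subset fun x hx => ?_
    obtain hle | heq := Nat.le_succ_iff.mp hx
    · exact Or.inl hle
    · obtain ⟨y, hxy, hy⟩ := exists_adj_dist_le_of_dist_eq_succ heq
      exact Or.inr (Set.mem_biUnion hy hxy.symm)

lemma ncard_setOf_dist_le_add_ncard_setOf_dist_eq {o : V} {n : ℕ}
    (hfin : {x | G.dist o x ≤ n + 1}.Finite) :
    {x | G.dist o x ≤ n}.ncard + {x | G.dist o x = n + 1}.ncard =
      {x | G.dist o x ≤ n + 1}.ncard := by
  have hunion : {x | G.dist o x ≤ n + 1} = {x | G.dist o x ≤ n} ∪ {x | G.dist o x = n + 1} := by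
    ext x; simp only [Set.mem_ofPred_eq, Set.mem_union]; omega
  rw [hunion] at hfin ⊢
  refine (Set.ncard_union_eq ?_ (hfin.subset Set.subset_union_left)
    (hfin.subset Set.subset_union_right)).symm
  exact Set.disjoint_left.mpr fun x (h₁ : _ ≤ n) (h₂ : _ = n + 1) => by omega

lemma ncard_le_mul_ncard_of_forall_adj_snd_mem {D : ℕ}
    (hdeg : ∀ v, (G.neighborSet v).Finite ∧ (G.neighborSet v).ncard ≤ D)
    {T : Set (V × V)} {S : Set V} (hS : S.Finite)
    (hT : ∀ p ∈ T, G.Adj p.1 p.2 ∧ p.2 ∈ S) : T.ncard ≤ D * S.ncard := by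
  have hsub : T ⊆ ⋃ y ∈ hS.toFinset, G.neighborSet y ×ˢ {y} := fun p hp => by
    simpa [adj_comm] using hT p hp
  calc T.ncard ≤ (⋃ y ∈ hS.toFinset, G.neighborSet y ×ˢ {y}).ncard :=
        Set.ncard_le_ncard hsub <| hS.toFinset.finite_toSet.biUnion fun y _ =>
          (hdeg y).1.prod (Set.finite_singleton y)
    _ ≤ ∑ y ∈ hS.toFinset, (G.neighborSet y ×ˢ {y}).ncard := Finset.set_ncard_biUnion_le _ _
    _ ≤ hS.toFinset.card • D :=
        Finset.sum_le_card_nsmul _ _ _ fun y _ => by simpa [Set.ncard_prod] using (hdeg y).2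
    _ = D * S.ncard := by rw [smul_eq_mul, mul_comm, Set.ncard_eq_toFinset_card _ hS]

end SimpleGraph

lemma Real.liminf_eq_zero_of_frequently_lt {α : Type*} {f : Filter α} {u : α → ℝ}
    (h0 : ∀ a, 0 ≤ u a) (h : ∀ ε > 0, ∃ᶠ a in f, u a < ε) : liminf u f = 0 := by
  have hle : ∀ ε > 0, ∃ᶠ a in f, u a ≤ ε := fun ε hε => (h ε hε).mono fun _ => le_of_lt
  refine le_antisymm (le_of_forall_gt_imp_ge_of_dense fun ε hε => ?_) ?_
  · exact liminf_le_of_frequently_le (hle ε hε) (isBoundedUnder_of_eventually_ge (.of_forall h0))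
  · exact le_liminf_of_le (.of_frequently_le (hle 1 one_pos)) (.of_forall h0)

/-- In `ℝ` a `liminf` that is not cobounded is the junk value `sSup ∅ = 0` or the `sSup` of an
unbounded set, also `0`. -/
lemma Real.isCoboundedUnder_ge_of_liminf_ne_zero {α : Type*} {f : Filter α} {u : α → ℝ}
    (h : liminf u f ≠ 0) : f.IsCoboundedUnder (· ≥ ·) u := by
  rw [liminf_eq] at h
  by_contra hc
  exact h (Real.sSup_of_not_bddAbove hc)

lemma eventually_pow_le_of_eventually_mul_le {b : ℕ → ℝ} {r c : ℝ} (hb : ∀ n, 0 < b n)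
    (hc : 0 < c) (hcr : c < r) (h : ∀ᶠ n in atTop, r * b n ≤ b (n + 1)) :
    ∀ᶠ n in atTop, c ^ n ≤ b n := by
  obtain ⟨N, hN⟩ := eventually_atTop.mp h
  have hr : 0 < r := hc.trans hcr
  set K := b N / r ^ N
  have hK : 0 < K := div_pos (hb N) (pow_pos hr N)
  have hgeom : ∀ n ≥ N, K * r ^ n ≤ b n := by
    intro n hn
    induction n, hn using Nat.le_induction with
    | base => simp [K, (pow_pos hr N).ne']
    | succ n hn ih =>
      calc K * r ^ (n + 1) = r * (K * r ^ n) := by ring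
        _ ≤ r * b n := by gcongr
        _ ≤ b (n + 1) := hN n hn
  have hsmall : ∀ᶠ n in atTop, (c / r) ^ n < K :=
    (tendsto_pow_atTop_nhds_zero_of_lt_one (by positivity) ((div_lt_one hr).2 hcr)).eventually
      (gt_mem_nhds hK)
  filter_upwards [hsmall, eventually_ge_atTop N] with n hn hnN
  calc c ^ n = (c / r) ^ n * r ^ n := by rw [div_pow, div_mul_cancel₀ _ (pow_pos hr n).ne']
    _ ≤ K * r ^ n := by gcongr
    _ ≤ b n := hgeom n hnN

lemma frequently_lt_mul_of_liminf_rpow_inv_eq_one {b : ℕ → ℝ} (hb : ∀ n, 0 < b n)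
    (h : liminf (fun n : ℕ => b n ^ (n : ℝ)⁻¹) atTop = 1) {r : ℝ} (hr : 1 < r) :
    ∃ᶠ n in atTop, b (n + 1) < r * b n := by
  by_contra hfreq
  simp only [not_frequently, not_lt] at hfreq
  have hpow := eventually_pow_le_of_eventually_mul_le hb (c := (1 + r) / 2) (by linarith)
    (by linarith) hfreq
  have hroot : ∀ᶠ n : ℕ in atTop, (1 + r) / 2 ≤ b n ^ (n : ℝ)⁻¹ := by
    filter_upwards [hpow, eventually_ne_atTop 0] with n hn hn0
    calc (1 + r) / 2 = (((1 + r) / 2) ^ n) ^ (n : ℝ)⁻¹ :=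
          (Real.pow_rpow_inv_natCast (by linarith) hn0).symm
      _ ≤ b n ^ (n : ℝ)⁻¹ := by gcongr
  have := le_liminf_of_le (Real.isCoboundedUnder_ge_of_liminf_ne_zero (h ▸ one_ne_zero)) hroot
  linarith

lemma liminf_div_eq_zero_of_le_mul_sub {b e : ℕ → ℝ} {C : ℝ} (hb : ∀ n, 0 < b n)
    (he : ∀ n, 0 ≤ e n) (hC : 0 ≤ C) (hle : ∀ n, e n ≤ C * (b (n + 1) - b n))
    (h : liminf (fun n : ℕ => b n ^ (n : ℝ)⁻¹) atTop = 1) :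
    liminf (fun n => e n / b n) atTop = 0 := by
  refine Real.liminf_eq_zero_of_frequently_lt (fun n => div_nonneg (he n) (hb n).le) fun ε hε => ?_
  have hδ : 0 < ε / (C + 1) := by positivity
  refine (frequently_lt_mul_of_liminf_rpow_inv_eq_one hb h (r := 1 + ε / (C + 1))
    (by linarith)).mono fun n hn => ?_
  rw [div_lt_iff₀ (hb n)]
  calc e n ≤ C * (b (n + 1) - b n) := hle n
    _ ≤ C * (ε / (C + 1) * b n) := by gcongr; linarith
    _ = C / (C + 1) * (ε * b n) := by ring
    _ < ε * b n := by
      refine mul_lt_of_lt_one_left (mul_pos hε (hb n)) ?_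
      rw [div_lt_one (by positivity)]; linarith

/-- If a connected bounded-degree graph has subexponential growth of balls from `o`,
then the relative number of edges between sphere `n` and sphere `n+1` has liminf `0`
(condition (1.5) of the paper is weaker than subexponential growth (1.4)). -/
theorem boundary_edges_liminf_zero_of_subexponential_growth
    {V : Type*} (G : SimpleGraph V) (hconn : G.Connected)
    (D : ℕ) (hdeg : ∀ v : V, (G.neighborSet v).Finite ∧ (G.neighborSet v).ncard ≤ D)
    (o : V)
    (hsub : Filter.liminf
        (fun n : ℕ => (({x : V | G.dist o x ≤ n}.ncard : ℝ)) ^ ((n : ℝ)⁻¹))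
        Filter.atTop = 1) :
    Filter.liminf
      (fun n : ℕ =>
        ({p : V × V | G.Adj p.1 p.2 ∧ G.dist o p.1 = n ∧ G.dist o p.2 = n + 1}.ncard : ℝ) /
          ({x : V | G.dist o x ≤ n}.ncard : ℝ))
      Filter.atTop = 0 := by
  have hball := hconn.finite_setOf_dist_le (fun v => (hdeg v).1) o
  refine liminf_div_eq_zero_of_le_mul_sub (b := fun n => ({x | G.dist o x ≤ n}.ncard : ℝ))
    (fun n => ?_) (fun n => by positivity) (Nat.cast_nonneg D) (fun n => ?_) hsub
  · exact_mod_cast (Set.ncard_pos (hball n)).2 ⟨o, by simp⟩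
  · have hsphere := G.ncard_setOf_dist_le_add_ncard_setOf_dist_eq (hball (n + 1))
    have hedges := G.ncard_le_mul_ncard_of_forall_adj_snd_mem hdeg
      (T := {p : V × V | G.Adj p.1 p.2 ∧ G.dist o p.1 = n ∧ G.dist o p.2 = n + 1})
      (S := {x | G.dist o x = n + 1}) ((hball (n + 1)).subset fun x hx => hx.le)
      fun p hp => ⟨hp.1, hp.2.2⟩
    rw [← hsphere, Nat.cast_add, add_sub_cancel_left]
    exact_mod_cast hedges
end

section
/- Let Δ be a finite nonempty set and let μ be a probability measure on {0,1}^{Δ × ℤ} that is downward FKG and invariant under the shift in the second coordinate ((θη)(y,i) = η(y,i+1)). Suppose there exists ρ ∈ (0,1) such that μ(η(y,i) = 0 for all y ∈ Δ and all i ∈ {1,…,n}) ≤ (1−ρ)^n for every n ≥ 1. Define Y : {0,1}^{Δ×ℤ} → {0,1}^ℤ by Y(η)(i) = max{η(y,i) : y ∈ Δ}. Then the pushforward of μ under Y stochastically dominates the Bernoulli product measure μ_ρ on {0,1}^ℤ. (This composite of Lemmas 2.2 and 2.3 is the key step, equation (3.8), in the proof of Theorem 1.4 of the paper.) -/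
open MeasureTheory ProbabilityTheory

/-- `ν` is the Bernoulli product measure on `{0,1}^V` with density `ρ`:
it is a probability measure with the i.i.d. cylinder probabilities. -/
def IsBernoulliProduct {V : Type*} (ρ : NNReal) (ν : Measure (V → Bool)) : Prop :=
  IsProbabilityMeasure ν ∧
    ∀ Δ Λ : Finset V, Disjoint Δ Λ →
      ν {η | (∀ x ∈ Δ, η x = true) ∧ (∀ x ∈ Λ, η x = false)} =
        (ρ : ENNReal) ^ Δ.card * ((1 - ρ : NNReal) : ENNReal) ^ Λ.card

/-- `μ₁` stochastically dominates `μ₂`. -/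
def StochDom {V : Type*} (μ₁ μ₂ : Measure (V → Bool)) : Prop :=
  ∀ B : Set (V → Bool), IncreasingEvent B → μ₂ B ≤ μ₁ B

/-- The column maximum `Y(η)(i) = max {η(y,i) : y ∈ Δ}`. -/
noncomputable def columnMax {Δ : Type*} [Fintype Δ] (η : Δ × ℤ → Bool) (i : ℤ) : Bool :=
  Finset.univ.sup (fun y : Δ => η (y, i))


/-!
Push the measure forward to `m` on `{0,1}^ℤ`; it is again downward FKG and shift invariant, and
runs of zeros have probability `a n ≤ (1 - ρ)^n`. Downward FKG makes `n ↦ a n` log-convex, so the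
ratios `a (n+1) / a n` increase and the exponential bound forces each of them to be at most
`1 - ρ`. Comparing an arbitrary finite zero set with a run containing it, again by downward FKG,
gives `m(η x = 0 | η ≡ 0 on G) ≤ 1 - ρ` whenever `G` lies to the right of `x`. Revealing the
coordinates of a finite window from right to left, every new coordinate is therefore `1` with
conditional probability at least `ρ`, which dominates the Bernoulli measure on increasing
cylinder events; inner regularity extends this to all increasing events.
-/

open scoped ENNReal NNReal

section Events

variable {V : Type*}

lemma zeroOn_union (Λ₁ Λ₂ : Set V) : ZeroOn (Λ₁ ∪ Λ₂) = ZeroOn Λ₁ ∩ ZeroOn Λ₂ := by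
  ext η
  simp only [ZeroOn, Set.mem_union, Set.mem_inter_iff, Set.mem_ofPred_eq, or_imp, forall_and]

lemma zeroOn_anti : Antitone (ZeroOn : Set V → Set (V → Bool)) :=
  fun _ _ h _ hη x hx => hη x (h hx)

@[simp]
lemma zeroOn_empty : ZeroOn (∅ : Set V) = Set.univ := by
  simp [ZeroOn]

lemma zeroOn_insert (x : V) (Λ : Set V) : ZeroOn (insert x Λ) = ZeroOn Λ ∩ ZeroOn {x} := by
  rw [Set.insert_eq, zeroOn_union, Set.inter_comm]

@[simp]
lemma zeroOn_singleton (x : V) : ZeroOn {x} = {η : V → Bool | η x = false} := by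
  simp [ZeroOn]

lemma measurableSet_setOf_apply_eq (x : V) (b : Bool) :
    MeasurableSet {η : V → Bool | η x = b} :=
  measurableSet_eq_fun (measurable_pi_apply x) measurable_const

lemma measurableSet_zeroOn_s11 {Λ : Set V} (hΛ : Λ.Countable) : MeasurableSet (ZeroOn Λ) := by
  have : ZeroOn Λ = ⋂ x ∈ Λ, {η : V → Bool | η x = false} := by ext; simp [ZeroOn]
  rw [this]
  exact .biInter hΛ fun x _ => measurableSet_setOf_apply_eq x false

lemma measurableSet_zeroOn_finset (Λ : Finset V) : MeasurableSet (ZeroOn (Λ : Set V)) :=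
  measurableSet_zeroOn_s11 Λ.countable_toSet

lemma IncreasingEvent.preimage {W : Type*} {B : Set (W → Bool)} (hB : IncreasingEvent B)
    {f : (V → Bool) → (W → Bool)} (hf : Measurable f) (hfm : Monotone f) :
    IncreasingEvent (f ⁻¹' B) :=
  ⟨hB.1.preimage hf, fun _ _ h hξ => hB.2 (hfm h) hξ⟩

lemma increasingEvent_compl_zeroOn {Λ : Set V} (hΛ : Λ.Countable) :
    IncreasingEvent (ZeroOn Λ)ᶜ := by
  refine ⟨(measurableSet_zeroOn_s11 hΛ).compl, fun ξ η hle hξ hη => hξ fun x hx => ?_⟩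
  exact le_bot_iff.mp ((hle x).trans_eq (hη x hx))

end Events

section Association

variable {V W : Type*}

lemma PositivelyAssociated.mul_le_inter_compl {κ : Measure (V → Bool)} [IsProbabilityMeasure κ]
    (hκ : PositivelyAssociated κ) {B₁ B₂ : Set (V → Bool)}
    (h₁ : IncreasingEvent B₁) (h₂ : IncreasingEvent B₂) :
    κ B₁ᶜ * κ B₂ᶜ ≤ κ (B₁ᶜ ∩ B₂ᶜ) := by
  rw [← ENNReal.toReal_le_toReal (by finiteness) (by finiteness), ENNReal.toReal_mul,
    ← Set.compl_union]
  simp only [← measureReal_def]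
  rw [probReal_compl_eq_one_sub h₁.1, probReal_compl_eq_one_sub h₂.1,
    probReal_compl_eq_one_sub (h₁.1.union h₂.1)]
  have hunion := measureReal_union_add_inter (μ := κ) (s := B₁) h₂.1
  have hcorr : κ.real B₁ * κ.real B₂ ≤ κ.real (B₁ ∩ B₂) := by
    simpa only [measureReal_def, ENNReal.toReal_mul] using
      ENNReal.toReal_mono (by finiteness) (hκ B₁ B₂ h₁ h₂)
  linarith

lemma PositivelyAssociated.map {μ : Measure (V → Bool)} (hμ : PositivelyAssociated μ)
    {f : (V → Bool) → (W → Bool)} (hf : Measurable f) (hfm : Monotone f) :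
    PositivelyAssociated (μ.map f) := by
  intro B₁ B₂ h₁ h₂
  rw [Measure.map_apply hf h₁.1, Measure.map_apply hf h₂.1,
    Measure.map_apply hf (h₁.1.inter h₂.1), Set.preimage_inter]
  exact hμ _ _ (h₁.preimage hf hfm) (h₂.preimage hf hfm)

lemma cond_map {Ω Ω' : Type*} [MeasurableSpace Ω] [MeasurableSpace Ω'] {μ : Measure Ω}
    {f : Ω → Ω'} (hf : Measurable f) {s : Set Ω'} (hs : MeasurableSet s) :
    (μ.map f)[|s] = (μ[|f ⁻¹' s]).map f := by
  ext t ht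
  rw [cond_apply hs, Measure.map_apply hf ht, Measure.map_apply hf hs,
    cond_apply (hs.preimage hf), Measure.map_apply hf (hs.inter ht), Set.preimage_inter]

lemma DownwardFKG.map {μ : Measure (V → Bool)} (hμ : DownwardFKG μ)
    {f : (V → Bool) → (W → Bool)} (hf : Measurable f) (hfm : Monotone f)
    (hzero : ∀ Λ : Finset W, ∃ T : Finset V, f ⁻¹' ZeroOn ↑Λ = ZeroOn ↑T) :
    DownwardFKG (μ.map f) := by
  intro Λ hΛ
  obtain ⟨T, hT⟩ := hzero Λ
  rw [Measure.map_apply hf (measurableSet_zeroOn_finset Λ), hT] at hΛ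
  rw [cond_map hf (measurableSet_zeroOn_finset Λ), hT]
  exact (hμ T hΛ).map hf hfm

/-- Conditioning on more zeros makes further zeros more likely:
`μ[ZeroOn A | ZeroOn C] ≤ μ[ZeroOn A | ZeroOn B]` for `C ⊆ B`, written without division. -/
lemma DownwardFKG.measure_zeroOn_union_mul_le [DecidableEq V] {μ : Measure (V → Bool)}
    [IsProbabilityMeasure μ] (hμ : DownwardFKG μ) (A : Finset V) {B C : Finset V} (hCB : C ⊆ B) :
    μ (ZeroOn (↑(A ∪ C) : Set V)) * μ (ZeroOn (B : Set V)) ≤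
      μ (ZeroOn (↑(A ∪ B) : Set V)) * μ (ZeroOn (C : Set V)) := by
  have hC := measurableSet_zeroOn_finset C
  have hZB : ZeroOn (B : Set V) ⊆ ZeroOn (C : Set V) := zeroOn_anti (Finset.coe_subset.mpr hCB)
  have hAC : ZeroOn (↑(A ∪ C) : Set V) = ZeroOn (C : Set V) ∩ ZeroOn (A : Set V) := by
    rw [Finset.coe_union, zeroOn_union, Set.inter_comm]
  have hAB : ZeroOn (↑(A ∪ B) : Set V) = ZeroOn (C : Set V) ∩ (ZeroOn (A : Set V) ∩ ZeroOn ↑B) := by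
    rw [Finset.coe_union, zeroOn_union,
      Set.inter_eq_right.mpr (Set.inter_subset_right.trans hZB)]
  rcases eq_or_ne (μ (ZeroOn (C : Set V))) 0 with h0 | h0
  · rw [hAC, measure_mono_null Set.inter_subset_left h0, zero_mul]
    exact zero_le
  have := cond_isProbabilityMeasure (μ := μ) h0
  have hcorr := (hμ C (pos_iff_ne_zero.mpr h0)).mul_le_inter_compl
    (increasingEvent_compl_zeroOn A.countable_toSet)
    (increasingEvent_compl_zeroOn B.countable_toSet)
  simp only [compl_compl] at hcorr
  calc μ (ZeroOn (↑(A ∪ C) : Set V)) * μ (ZeroOn (B : Set V))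
      = μ (ZeroOn (C : Set V) ∩ ZeroOn ↑A) * μ (ZeroOn (C : Set V) ∩ ZeroOn ↑B) := by
        rw [hAC, Set.inter_eq_right.mpr hZB]
    _ = μ[ZeroOn (A : Set V) | ZeroOn ↑C] * μ[ZeroOn (B : Set V) | ZeroOn ↑C] *
          μ (ZeroOn (C : Set V)) * μ (ZeroOn (C : Set V)) := by
        rw [← cond_mul_eq_inter hC, ← cond_mul_eq_inter hC]; ring
    _ ≤ μ[ZeroOn (A : Set V) ∩ ZeroOn ↑B | ZeroOn ↑C] * μ (ZeroOn (C : Set V)) *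
          μ (ZeroOn (C : Set V)) := by gcongr
    _ = μ (ZeroOn (↑(A ∪ B) : Set V)) * μ (ZeroOn (C : Set V)) := by
        rw [cond_mul_eq_inter hC, hAB]

end Association

section Bernoulli

variable {V : Type*}

def cylinderSet (Δ Λ : Finset V) : Set (V → Bool) :=
  {η | (∀ x ∈ Δ, η x = true) ∧ (∀ x ∈ Λ, η x = false)}

@[simp]
lemma cylinderSet_empty_left (Λ : Finset V) : cylinderSet ∅ Λ = ZeroOn (Λ : Set V) := by
  simp [cylinderSet, ZeroOn]

lemma eq_empty_or_eq_univ_of_dependsOn_empty {B : Set (V → Bool)}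
    (hB : DependsOn (· ∈ B) (∅ : Set V)) : B = ∅ ∨ B = Set.univ := by
  refine B.eq_empty_or_nonempty.imp id fun ⟨η, hη⟩ => Set.eq_univ_of_forall fun ξ => ?_
  exact hB.empty η ξ ▸ hη

lemma IsBernoulliProduct.measure_cylinderSet {ρ : ℝ≥0} {ν : Measure (V → Bool)}
    (hν : IsBernoulliProduct ρ ν) {Δ Λ : Finset V} (h : Disjoint Δ Λ) :
    ν (cylinderSet Δ Λ) = (ρ : ℝ≥0∞) ^ Δ.card * (1 - (ρ : ℝ≥0∞)) ^ Λ.card := by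
  simpa [cylinderSet, ENNReal.coe_sub] using hν.2 Δ Λ h

lemma IsBernoulliProduct.coe_le_one {ρ : ℝ≥0} {ν : Measure (V → Bool)}
    (hν : IsBernoulliProduct ρ ν) (x : V) : (ρ : ℝ≥0∞) ≤ 1 := by
  have := hν.1
  simpa using (hν.measure_cylinderSet (Finset.disjoint_empty_right {x})).symm.trans_le
    prob_le_one

variable [DecidableEq V]

lemma measure_inter_cylinderSet_eq_add (μ : Measure (V → Bool)) (E : Set (V → Bool)) (x : V)
    (Δ Λ : Finset V) :
    μ (E ∩ cylinderSet Δ Λ) =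
      μ ((Function.update · x true) ⁻¹' E ∩ cylinderSet (insert x Δ) Λ) +
        μ ((Function.update · x false) ⁻¹' E ∩ cylinderSet Δ (insert x Λ)) := by
  rw [← measure_inter_add_sdiff _ (measurableSet_setOf_apply_eq x true)]
  congr 1 <;> congr 1 <;> ext η <;> cases hx : η x <;>
    simp [cylinderSet, hx, (Function.update_eq_self_iff (f := η) (a := x)).mpr hx.symm]

lemma IsBernoulliProduct.measure_inter_cylinderSet {ρ : ℝ≥0} {ν : Measure (V → Bool)}
    (hν : IsBernoulliProduct ρ ν) {F : Finset V} {E : Set (V → Bool)}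
    (hE : DependsOn (· ∈ E) (F : Set V)) {Δ Λ : Finset V} (hΔΛ : Disjoint Δ Λ)
    (hΔF : Disjoint Δ F) (hΛF : Disjoint Λ F) :
    ν (E ∩ cylinderSet Δ Λ) = ν E * ν (cylinderSet Δ Λ) := by
  induction F using Finset.induction_on generalizing E Δ Λ with
  | empty =>
    rw [Finset.coe_empty] at hE
    rcases eq_empty_or_eq_univ_of_dependsOn_empty hE with rfl | rfl <;> simp [hν.1]
  | insert y F hy ih =>
    have hdep : ∀ b, DependsOn (· ∈ (Function.update · y b) ⁻¹' E) (F : Set V) := fun b => by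
      simpa [Finset.erase_insert hy] using hE.update y b
    have key : ∀ Δ Λ : Finset V, Disjoint Δ Λ → Disjoint Δ (insert y F) →
        Disjoint Λ (insert y F) →
        ν (E ∩ cylinderSet Δ Λ) =
          ν ((Function.update · y true) ⁻¹' E) * ν (cylinderSet (insert y Δ) Λ) +
            ν ((Function.update · y false) ⁻¹' E) * ν (cylinderSet Δ (insert y Λ)) := by
      intro Δ Λ hΔΛ hΔF hΛF
      rw [Finset.disjoint_insert_right] at hΔF hΛF
      rw [measure_inter_cylinderSet_eq_add ν E y,
        ih (hdep true) (Finset.disjoint_insert_left.mpr ⟨hΛF.1, hΔΛ⟩)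
          (Finset.disjoint_insert_left.mpr ⟨hy, hΔF.2⟩) hΛF.2,
        ih (hdep false) (Finset.disjoint_insert_right.mpr ⟨hΔF.1, hΔΛ⟩) hΔF.2
          (Finset.disjoint_insert_left.mpr ⟨hy, hΛF.2⟩)]
    have hE_eq := key ∅ ∅ (by simp) (by simp) (by simp)
    rw [cylinderSet_empty_left, Finset.coe_empty, zeroOn_empty, Set.inter_univ] at hE_eq
    rw [Finset.disjoint_insert_right] at hΔF hΛF
    rw [key Δ Λ hΔΛ (Finset.disjoint_insert_right.mpr hΔF)
      (Finset.disjoint_insert_right.mpr hΛF), hE_eq]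
    simp only [hν.measure_cylinderSet, Finset.disjoint_insert_left, Finset.disjoint_insert_right,
      Finset.disjoint_empty_left, Finset.disjoint_empty_right, hΔΛ, hΔF.1, hΛF.1,
      Finset.card_insert_of_notMem, not_false_eq_true, and_true, Finset.card_empty,
      insert_empty_eq, Finset.card_singleton]
    ring

end Bernoulli

section Regularity

variable {V : Type*}

lemma measurableSet_preimage_restrict_image (F : Finset V) (C : Set (V → Bool)) :
    MeasurableSet (F.restrict ⁻¹' (F.restrict '' C)) :=
  F.measurable_restrict (Set.to_countable _).measurableSet

lemma dependsOn_mem_preimage_restrict_image (F : Finset V) (C : Set (V → Bool)) :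
    DependsOn (· ∈ F.restrict ⁻¹' (F.restrict '' C)) (F : Set V) := fun η ξ h => by
  simp only [Set.mem_preimage, Finset.dependsOn_restrict F h]

lemma IsUpperSet.preimage_restrict_image {C : Set (V → Bool)} (hC : IsUpperSet C)
    (F : Finset V) : IsUpperSet (F.restrict ⁻¹' (F.restrict '' C)) := by
  classical
  rintro η η' hle ⟨ξ, hξ, h⟩
  refine ⟨fun i => if i ∈ F then η' i else ξ i, hC (fun i => ?_) hξ, ?_⟩
  · split_ifs with hi
    · exact (congrFun h ⟨i, hi⟩).trans_le (hle i)
    · exact le_rfl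
  · ext ⟨i, hi⟩
    simp [hi]

lemma iInter_preimage_restrict_image {C : Set (V → Bool)} (hC : IsClosed C) :
    ⋂ F : Finset V, F.restrict ⁻¹' (F.restrict '' C) = C := by
  refine Set.Subset.antisymm (fun η hη => ?_)
    (Set.subset_iInter fun F => Set.subset_preimage_image _ _)
  by_contra hηC
  obtain ⟨I, u, hu, hsub⟩ := isOpen_pi_iff.mp hC.isOpen_compl η hηC
  obtain ⟨ξ, hξC, hξη⟩ := Set.mem_iInter.mp hη I
  refine hsub (fun i hi => ?_) hξC
  rw [show ξ i = η i from congrFun hξη ⟨i, hi⟩]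
  exact (hu i hi).2

instance : ContinuousSup Bool := ⟨continuous_of_discreteTopology⟩

instance {ι : Type*} {π : ι → Type*} [∀ i, TopologicalSpace (π i)] [∀ i, Max (π i)]
    [∀ i, ContinuousSup (π i)] : ContinuousSup (∀ i, π i) :=
  ⟨continuous_pi fun i =>
    ((continuous_apply i).comp continuous_fst).sup ((continuous_apply i).comp continuous_snd)⟩

protected lemma IsCompact.upperClosure {α : Type*} [SemilatticeSup α] [TopologicalSpace α]
    [ContinuousSup α] [CompactSpace α] {K : Set α} (hK : IsCompact K) :
    IsCompact (upperClosure K : Set α) := by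
  have : (_root_.upperClosure K : Set α) = (fun p : α × α => p.1 ⊔ p.2) '' (K ×ˢ Set.univ) := by
    ext η
    simp only [coe_upperClosure, Set.mem_iUnion, Set.mem_Ici, Set.mem_image, Set.mem_prod,
      Set.mem_univ, and_true, Prod.exists, exists_prop]
    exact ⟨fun ⟨ξ, hξ, hle⟩ => ⟨ξ, η, hξ, sup_eq_right.mpr hle⟩,
      fun ⟨ξ, ζ, hξ, h⟩ => ⟨ξ, hξ, h ▸ le_sup_left⟩⟩
  rw [this]
  exact (hK.prod isCompact_univ).image continuous_sup

variable [Countable V] {m ν : Measure (V → Bool)}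

lemma measure_le_of_isClosed_of_dependsOn [IsFiniteMeasure m]
    (h : ∀ (F : Finset V) (B : Set (V → Bool)), IncreasingEvent B →
      DependsOn (· ∈ B) (F : Set V) → ν B ≤ m B)
    {C : Set (V → Bool)} (hC : IsClosed C) (hCu : IsUpperSet C) : ν C ≤ m C := by
  have hanti : Antitone fun F : Finset V => F.restrict ⁻¹' (F.restrict '' C) :=
    fun F F' hFF' η ⟨ξ, hξ, h⟩ => ⟨ξ, hξ, funext fun i => congrFun h ⟨i, hFF' i.2⟩⟩
  calc ν C ≤ ⨅ F : Finset V, m (F.restrict ⁻¹' (F.restrict '' C)) :=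
        le_iInf fun F => (measure_mono (Set.subset_preimage_image _ _)).trans <|
          h F _ ⟨measurableSet_preimage_restrict_image F C, hCu.preimage_restrict_image F⟩
            (dependsOn_mem_preimage_restrict_image F C)
    _ = m (⋂ F : Finset V, F.restrict ⁻¹' (F.restrict '' C)) :=
        (hanti.measure_iInter
          (fun F => (measurableSet_preimage_restrict_image F C).nullMeasurableSet)
          ⟨∅, measure_ne_top _ _⟩).symm
    _ = m C := by rw [iInter_preimage_restrict_image hC]

theorem StochDom.of_dependsOn [IsFiniteMeasure m] [IsFiniteMeasure ν]
    (h : ∀ (F : Finset V) (B : Set (V → Bool)), IncreasingEvent B →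
      DependsOn (· ∈ B) (F : Set V) → ν B ≤ m B) :
    StochDom m ν := by
  intro B hB
  rw [hB.1.measure_eq_iSup_isCompact ν]
  refine iSup₂_le fun K hKB => iSup_le fun hK => ?_
  calc ν K ≤ ν (upperClosure K) := measure_mono subset_upperClosure
    _ ≤ m (upperClosure K) :=
        measure_le_of_isClosed_of_dependsOn h hK.upperClosure.isClosed (upperClosure K).upper
    _ ≤ m B := measure_mono (upperClosure_min hKB hB.2)

end Regularity

lemma ENNReal.mul_add_mul_one_sub_mono {a b p q : ℝ≥0∞} (hba : b ≤ a) (hpq : p ≤ q)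
    (hq : q ≤ 1) : a * p + b * (1 - p) ≤ a * q + b * (1 - q) :=
  calc a * p + b * (1 - p) = a * p + b * (q - p) + b * (1 - q) := by
        rw [← tsub_add_tsub_cancel hq hpq]; ring
    _ ≤ a * p + a * (q - p) + b * (1 - q) := by gcongr
    _ = a * q + b * (1 - q) := by rw [← mul_add, add_tsub_cancel_of_le hpq]

section FiniteDomination

variable {V : Type*} [DecidableEq V]

lemma measure_eq_add_update (μ : Measure (V → Bool)) (E : Set (V → Bool)) (x : V) :
    μ E = μ ((Function.update · x true) ⁻¹' E ∩ cylinderSet {x} ∅) +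
      μ ((Function.update · x false) ⁻¹' E ∩ cylinderSet ∅ {x}) := by
  simpa using measure_inter_cylinderSet_eq_add μ E x ∅ ∅

lemma DependsOn.mem_preimage_update {B : Set (V → Bool)} {F : Finset V} {x : V}
    (hB : DependsOn (· ∈ B) (↑(insert x F) : Set V)) (hx : x ∉ F) (b : Bool) :
    DependsOn (· ∈ (Function.update · x b) ⁻¹' B) (F : Set V) := by
  simpa [Finset.erase_insert hx] using hB.update x b

lemma IncreasingEvent.preimage_update {B : Set (V → Bool)} (hB : IncreasingEvent B) (x : V)
    (b : Bool) : IncreasingEvent ((Function.update · x b) ⁻¹' B) :=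
  hB.preimage measurable_update_left fun _ _ h =>
    update_le_update_iff.mpr ⟨le_rfl, fun i _ => h i⟩

lemma IsBernoulliProduct.measure_eq_update {ρ : ℝ≥0} {ν : Measure (V → Bool)}
    (hν : IsBernoulliProduct ρ ν) {B : Set (V → Bool)} {F : Finset V} {x : V}
    (hBF : DependsOn (· ∈ B) (↑(insert x F) : Set V)) (hx : x ∉ F) :
    ν B = ν ((Function.update · x true) ⁻¹' B) * ρ +
      ν ((Function.update · x false) ⁻¹' B) * (1 - ρ) := by
  have hxF := Finset.disjoint_singleton_left.mpr hx
  rw [measure_eq_add_update ν B x,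
    hν.measure_inter_cylinderSet (hBF.mem_preimage_update hx true) (by simp) hxF
      (Finset.disjoint_empty_left F),
    hν.measure_inter_cylinderSet (hBF.mem_preimage_update hx false) (by simp)
      (Finset.disjoint_empty_left F) hxF,
    hν.measure_cylinderSet (by simp), hν.measure_cylinderSet (by simp)]
  simp

/-- One step of revealing coordinate `x`: positive association bounds the part where `η x = 1`,
while the part where `η x = 0` is kept as a further conditioning. -/
lemma PositivelyAssociated.measure_update_add_le {κ : Measure (V → Bool)}
    [IsProbabilityMeasure κ] (hκ : PositivelyAssociated κ) {B : Set (V → Bool)}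
    (hB : IncreasingEvent B) (x : V) :
    κ ((Function.update · x true) ⁻¹' B) * (1 - κ (ZeroOn {x})) +
        κ[(Function.update · x false) ⁻¹' B | ZeroOn {x}] * κ (ZeroOn {x}) ≤ κ B := by
  have hZx := measurableSet_zeroOn_s11 (Set.countable_singleton x)
  have hcyl : cylinderSet {x} ∅ = (ZeroOn {x})ᶜ := by ext; simp [cylinderSet]
  rw [measure_eq_add_update κ B x, hcyl, cylinderSet_empty_left, Finset.coe_singleton,
    cond_mul_eq_inter hZx, Set.inter_comm (ZeroOn {x}), ← prob_compl_eq_one_sub hZx]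
  gcongr
  exact hκ _ _ (hB.preimage_update x true)
    (increasingEvent_compl_zeroOn (Set.countable_singleton x))

lemma cond_zeroOn_cond_zeroOn_singleton (m : Measure (V → Bool)) [IsFiniteMeasure m]
    (G : Finset V) (x : V) : m[|ZeroOn ↑G][|ZeroOn {x}] = m[|ZeroOn ↑(insert x G)] := by
  rw [cond_cond_eq_cond_inter (measurableSet_zeroOn_finset G)
    (measurableSet_zeroOn_s11 (Set.countable_singleton x)), Finset.coe_insert, zeroOn_insert]

end FiniteDomination

variable {V : Type*} [LinearOrder V] {ρ : ℝ≥0} {m ν : Measure (V → Bool)}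
  [IsProbabilityMeasure m] in
theorem IsBernoulliProduct.le_cond_zeroOn_of_dependsOn (hm : DownwardFKG m)
    (hν : IsBernoulliProduct ρ ν)
    (hcond : ∀ (G : Finset V) (x : V), (∀ y ∈ G, x < y) → m[ZeroOn {x} | ZeroOn ↑G] ≤ 1 - ρ)
    (F : Finset V) {B : Set (V → Bool)} (hB : IncreasingEvent B)
    (hBF : DependsOn (· ∈ B) (F : Set V)) {G : Finset V} (hFG : ∀ x ∈ F, ∀ y ∈ G, x < y)
    (hG : m (ZeroOn ↑G) ≠ 0) :
    ν B ≤ m[B | ZeroOn ↑G] := by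
  classical
  have := hν.1
  induction F using Finset.induction_on_max generalizing B G with
  | empty =>
    have := cond_isProbabilityMeasure hG
    rw [Finset.coe_empty] at hBF
    rcases eq_empty_or_eq_univ_of_dependsOn_empty hBF with rfl | rfl <;> simp
  | insert x F hxF ih =>
    have := cond_isProbabilityMeasure hG
    have hx : x ∉ F := fun h => lt_irrefl x (hxF x h)
    set B₁ := (Function.update · x true) ⁻¹' B
    set B₀ := (Function.update · x false) ⁻¹' B
    set q := m[ZeroOn {x} | ZeroOn ↑G]
    have hρq : (ρ : ℝ≥0∞) ≤ 1 - q := by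
      rw [← ENNReal.sub_sub_cancel ENNReal.one_ne_top (hν.coe_le_one x)]
      exact tsub_le_tsub_left (hcond G x fun y hy => hFG x (Finset.mem_insert_self x F) y hy) 1
    have hB₀₁ : ν B₀ ≤ ν B₁ := measure_mono fun η hη =>
      hB.2 (update_le_update_iff.mpr ⟨Bool.false_le _, fun _ _ => le_rfl⟩) hη
    have hfalse : ν B₀ * q ≤ m[|ZeroOn ↑G][B₀ | ZeroOn {x}] * q := by
      rcases eq_or_ne q 0 with hq | hq
      · simp [hq]
      have hG' : m (ZeroOn ↑(insert x G)) ≠ 0 := by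
        rw [Finset.coe_insert, zeroOn_insert]
        exact (inter_pos_of_cond_ne_zero (measurableSet_zeroOn_finset G) hq).ne'
      rw [cond_zeroOn_cond_zeroOn_singleton]
      refine mul_le_mul_left (ih (hB.preimage_update x false) (hBF.mem_preimage_update hx false)
        (fun z hz y hy => ?_) hG') q
      rcases Finset.mem_insert.mp hy with rfl | hy
      exacts [hxF z hz, hFG z (Finset.mem_insert_of_mem hz) y hy]
    calc ν B = ν B₁ * ρ + ν B₀ * (1 - ρ) := hν.measure_eq_update hBF hx
      _ ≤ ν B₁ * (1 - q) + ν B₀ * (1 - (1 - q)) :=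
          ENNReal.mul_add_mul_one_sub_mono hB₀₁ hρq tsub_le_self
      _ = ν B₁ * (1 - q) + ν B₀ * q := by
          rw [ENNReal.sub_sub_cancel ENNReal.one_ne_top prob_le_one]
      _ ≤ m[B₁ | ZeroOn ↑G] * (1 - q) + m[|ZeroOn ↑G][B₀ | ZeroOn {x}] * q :=
          add_le_add (mul_le_mul_left (ih (hB.preimage_update x true)
            (hBF.mem_preimage_update hx true)
            (fun z hz y hy => hFG z (Finset.mem_insert_of_mem hz) y hy) hG) _) hfalse
      _ ≤ m[B | ZeroOn ↑G] := (hm G (pos_iff_ne_zero.mpr hG)).measure_update_add_le hB x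

lemma le_mul_of_sq_le_mul_of_le_pow {a : ℕ → ℝ} {c : ℝ} (hpos : ∀ n, 0 < a n)
    (hsq : ∀ n, a (n + 1) ^ 2 ≤ a n * a (n + 2)) (hpow : ∀ n, a n ≤ c ^ n) (n : ℕ) :
    a (n + 1) ≤ c * a n := by
  set r : ℕ → ℝ := fun k => a (k + 1) / a k
  have hc : 0 < c := by simpa using (hpos 1).trans_le (hpow 1)
  have hr : Monotone r := monotone_nat_of_le_succ fun k => by
    rw [div_le_div_iff₀ (hpos k) (hpos (k + 1))]
    nlinarith [hsq k]
  have hgrowth : ∀ k, a n * r n ^ k ≤ a (n + k) := by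
    intro k
    induction k with
    | zero => simp
    | succ k ih =>
      calc a n * r n ^ (k + 1) = a n * r n ^ k * r n := by ring
        _ ≤ a (n + k) * r (n + k) :=
            mul_le_mul ih (hr (by omega)) (div_pos (hpos _) (hpos _)).le (hpos _).le
        _ = a (n + (k + 1)) := by
            simp only [r, ← add_assoc]; exact mul_div_cancel₀ _ (hpos _).ne'
  by_contra! h
  obtain ⟨k, hk⟩ := pow_unbounded_of_one_lt (c ^ n / a n)
    ((one_lt_div hc).mpr ((lt_div_iff₀ (hpos n)).mpr h))
  rw [div_lt_iff₀ (hpos n), div_pow, div_mul_eq_mul_div, lt_div_iff₀ (pow_pos hc k)] at hk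
  nlinarith [hgrowth k, hpow (n + k), pow_add c n k]

section Runs

variable {m : Measure (ℤ → Bool)}

lemma preimage_shift_zeroOn (A : Finset ℤ) :
    (fun (η : ℤ → Bool) i => η (i + 1)) ⁻¹' ZeroOn (A : Set ℤ) = ZeroOn ↑(A.image (· + 1)) := by
  ext η
  simp only [Set.mem_preimage, ZeroOn, Set.mem_ofPred_eq, Finset.coe_image, Set.forall_mem_image,
    Finset.mem_coe]

lemma measure_zeroOn_image_add (hshift : m.map (fun η i => η (i + 1)) = m) (A : Finset ℤ)
    (k : ℤ) : m (ZeroOn ↑(A.image (· + k))) = m (ZeroOn ↑A) := by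
  have h1 : ∀ A : Finset ℤ, m (ZeroOn ↑(A.image (· + 1))) = m (ZeroOn ↑A) := fun A => by
    conv_rhs => rw [← hshift]
    rw [Measure.map_apply (measurable_pi_lambda _ fun i => measurable_pi_apply _)
      (measurableSet_zeroOn_finset A), preimage_shift_zeroOn]
  induction k using Int.induction_on with
  | zero => simp
  | succ k ih =>
    rw [← ih, ← h1 (A.image (· + k)), Finset.image_image]
    simp only [Function.comp_def, add_assoc]
  | pred k ih =>
    rw [← ih, ← h1 (A.image (· + (-k - 1))), Finset.image_image]
    simp only [Function.comp_def, add_assoc, sub_add_cancel]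

noncomputable def zeroRunProb (m : Measure (ℤ → Bool)) (n : ℕ) : ℝ≥0∞ :=
  m (ZeroOn ↑(Finset.Ico (0 : ℤ) n))

lemma zeroRunProb_antitone : Antitone (zeroRunProb m) := fun n k h =>
  measure_mono (zeroOn_anti (Finset.coe_subset.mpr (Finset.Ico_subset_Ico_right (by omega))))

lemma measure_zeroOn_Ico (hshift : m.map (fun η i => η (i + 1)) = m) (k : ℤ) (n : ℕ) :
    m (ZeroOn ↑(Finset.Ico k (k + n))) = zeroRunProb m n := by
  rw [zeroRunProb, ← measure_zeroOn_image_add hshift (Finset.Ico 0 n) k,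
    Finset.image_add_right_Ico, zero_add, add_comm (n : ℤ)]

variable [IsProbabilityMeasure m] (hm : DownwardFKG m) (hshift : m.map (fun η i => η (i + 1)) = m)
include hm hshift

lemma zeroRunProb_mul_le (n k : ℕ) :
    zeroRunProb m n * zeroRunProb m k ≤ zeroRunProb m (n + k) := by
  have h := hm.measure_zeroOn_union_mul_le (Finset.Ico (0 : ℤ) n)
    (Finset.empty_subset (Finset.Ico (n : ℤ) (n + k)))
  rwa [Finset.union_empty, Finset.Ico_union_Ico_eq_Ico (by positivity) (by omega),
    measure_zeroOn_Ico hshift, Finset.coe_empty, zeroOn_empty, measure_univ, mul_one,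
    ← Nat.cast_add] at h

lemma zeroRunProb_ne_zero (h1 : zeroRunProb m 1 ≠ 0) (n : ℕ) : zeroRunProb m n ≠ 0 := by
  induction n with
  | zero => simp [zeroRunProb]
  | succ n ih =>
    exact fun h => mul_ne_zero ih h1 (le_zero_iff.mp (h ▸ zeroRunProb_mul_le hm hshift n 1))

lemma zeroRunProb_sq_le (n : ℕ) :
    zeroRunProb m (n + 1) ^ 2 ≤ zeroRunProb m n * zeroRunProb m (n + 2) := by
  have h := hm.measure_zeroOn_union_mul_le {0}
    (Finset.Ico_subset_Ico_right (by omega) :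
      Finset.Ico (1 : ℤ) (1 + n) ⊆ Finset.Ico 1 (1 + ((n + 1 : ℕ) : ℤ)))
  have e : ∀ j : ℕ, {0} ∪ Finset.Ico (1 : ℤ) (1 + j) = Finset.Ico 0 (0 + ((j + 1 : ℕ) : ℤ)) := by
    intro j; ext; simp; omega
  rw [e, e, measure_zeroOn_Ico hshift, measure_zeroOn_Ico hshift, measure_zeroOn_Ico hshift,
    measure_zeroOn_Ico hshift] at h
  calc zeroRunProb m (n + 1) ^ 2 ≤ zeroRunProb m (n + 1 + 1) * zeroRunProb m n := by
        rwa [sq]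
    _ = _ := mul_comm _ _

variable {c : ℝ≥0∞} (hc : c ≠ ⊤) (hrun : ∀ n, zeroRunProb m n ≤ c ^ n)
include hc hrun

lemma zeroRunProb_succ_le (n : ℕ) : zeroRunProb m (n + 1) ≤ c * zeroRunProb m n := by
  rcases eq_or_ne (zeroRunProb m 1) 0 with h1 | h1
  · exact (zeroRunProb_antitone (by omega)).trans (h1.trans_le zero_le)
  have htop : ∀ k, zeroRunProb m k ≠ ⊤ := fun k => measure_ne_top _ _
  rw [← ENNReal.toReal_le_toReal (htop _) (ENNReal.mul_ne_top hc (htop _)), ENNReal.toReal_mul]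
  refine le_mul_of_sq_le_mul_of_le_pow
    (fun k => ENNReal.toReal_pos (zeroRunProb_ne_zero hm hshift h1 k) (htop k))
    (fun k => ?_) (fun k => ?_) n
  · rw [← ENNReal.toReal_pow, ← ENNReal.toReal_mul]
    exact ENNReal.toReal_mono (ENNReal.mul_ne_top (htop _) (htop _))
      (zeroRunProb_sq_le hm hshift k)
  · rw [← ENNReal.toReal_pow]
    exact ENNReal.toReal_mono (ENNReal.pow_ne_top hc) (hrun k)

lemma measure_zeroOn_insert_le {G : Finset ℤ} {x : ℤ} (hxG : ∀ y ∈ G, x < y) :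
    m (ZeroOn ↑(insert x G)) ≤ c * m (ZeroOn ↑G) := by
  rcases eq_or_ne (zeroRunProb m 1) 0 with h1 | h1
  · refine le_trans ?_ (h1.trans_le zero_le)
    rw [← measure_zeroOn_Ico hshift x 1]
    refine measure_mono (zeroOn_anti (Finset.coe_subset.mpr fun y hy => ?_))
    simp only [Finset.mem_Ico, Nat.cast_one] at hy
    exact Finset.mem_insert.mpr (Or.inl (by omega))
  obtain ⟨N, hN⟩ : ∃ N : ℕ, G ⊆ Finset.Ico (x + 1) (x + 1 + N) := by
    refine ⟨G.sup fun y => (y - x).toNat, fun y hy => ?_⟩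
    have := Finset.le_sup (f := fun y => (y - x).toNat) hy
    have := hxG y hy
    simp only [Finset.mem_Ico]
    omega
  have h := hm.measure_zeroOn_union_mul_le {x} hN
  have e : {x} ∪ Finset.Ico (x + 1) (x + 1 + N) = Finset.Ico x (x + ((N + 1 : ℕ) : ℤ)) := by
    ext; simp; omega
  rw [← Finset.insert_eq, e, measure_zeroOn_Ico hshift, measure_zeroOn_Ico hshift] at h
  rw [← ENNReal.mul_le_mul_iff_left (zeroRunProb_ne_zero hm hshift h1 N) (measure_ne_top _ _)]
  calc m (ZeroOn ↑(insert x G)) * zeroRunProb m N ≤ zeroRunProb m (N + 1) * m (ZeroOn ↑G) := h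
    _ ≤ c * zeroRunProb m N * m (ZeroOn ↑G) := by
        gcongr; exact zeroRunProb_succ_le hm hshift hc hrun N
    _ = c * m (ZeroOn ↑G) * zeroRunProb m N := by ring

lemma cond_zeroOn_singleton_le {G : Finset ℤ} {x : ℤ} (hxG : ∀ y ∈ G, x < y) :
    m[ZeroOn {x} | ZeroOn ↑G] ≤ c := by
  rw [cond_apply (measurableSet_zeroOn_finset G), ← zeroOn_insert, ← Finset.coe_insert]
  rcases eq_or_ne (m (ZeroOn ↑G)) 0 with h0 | h0
  · rw [measure_mono_null (zeroOn_anti (Finset.coe_subset.mpr (Finset.subset_insert x G))) h0,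
      mul_zero]
    exact zero_le
  rw [ENNReal.inv_mul_le_iff h0 (measure_ne_top _ _), mul_comm]
  exact measure_zeroOn_insert_le hm hshift hc hrun hxG

end Runs

theorem DownwardFKG.stochDom_of_zeroRun_le {m ν : Measure (ℤ → Bool)} [IsProbabilityMeasure m]
    (hm : DownwardFKG m) (hshift : m.map (fun η i => η (i + 1)) = m) {ρ : ℝ≥0}
    (hrun : ∀ n : ℕ, 1 ≤ n → m (ZeroOn ↑(Finset.Icc (1 : ℤ) n)) ≤ (1 - (ρ : ℝ≥0∞)) ^ n)
    (hν : IsBernoulliProduct ρ ν) : StochDom m ν := by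
  have := hν.1
  have hrun' : ∀ n, zeroRunProb m n ≤ (1 - (ρ : ℝ≥0∞)) ^ n := by
    rintro (_ | n)
    · simp [zeroRunProb]
    rw [← measure_zeroOn_Ico hshift 1]
    convert hrun (n + 1) n.succ_pos using 4
    ext; simp; omega
  refine StochDom.of_dependsOn fun F B hB hBF => ?_
  simpa using hν.le_cond_zeroOn_of_dependsOn hm
    (fun G x hxG => cond_zeroOn_singleton_le hm hshift (by finiteness) hrun' hxG) F hB hBF
    (G := ∅) (by simp) (by simp)

section ColumnMax

variable {Δ : Type*} [Fintype Δ]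

lemma measurable_columnMax : Measurable fun η : Δ × ℤ → Bool => columnMax η :=
  measurable_pi_lambda _ fun _ => measurable_of_countable _ |>.comp <|
    measurable_pi_lambda _ fun y => measurable_pi_apply (y, _)

lemma monotone_columnMax : Monotone fun η : Δ × ℤ → Bool => columnMax η :=
  fun _ _ h i => Finset.sup_mono_fun fun y _ => h (y, i)

lemma preimage_columnMax_zeroOn (S : Set ℤ) :
    (fun η : Δ × ℤ → Bool => columnMax η) ⁻¹' ZeroOn S = ZeroOn (Set.univ ×ˢ S) := by
  ext η
  simp only [Set.mem_preimage, ZeroOn, columnMax, ← bot_eq_false, Finset.sup_eq_bot_iff,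
    Finset.mem_univ, true_imp_iff, Set.mem_ofPred_eq, Set.mem_prod, Set.mem_univ, true_and,
    Prod.forall]
  exact ⟨fun h y i hi => h i hi y, fun h i hi y => h y i hi⟩

end ColumnMax

theorem columnMax_dominates_bernoulli_general {Δ : Type*} [Fintype Δ]
    (μ : Measure (Δ × ℤ → Bool)) [IsProbabilityMeasure μ]
    (htrans : μ.map (fun η (p : Δ × ℤ) => η (p.1, p.2 + 1)) = μ)
    (hdfkg : DownwardFKG μ) (ρ : NNReal)
    (hrun : ∀ n : ℕ, 1 ≤ n →
      μ (ZeroOn {p : Δ × ℤ | 1 ≤ p.2 ∧ p.2 ≤ (n : ℤ)}) ≤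
        ((1 - ρ : NNReal) : ENNReal) ^ n) :
    ∀ ν : Measure (ℤ → Bool), IsBernoulliProduct ρ ν →
      StochDom (μ.map (fun η => columnMax η)) ν := by
  intro ν hν
  have hY := measurable_columnMax (Δ := Δ)
  have := Measure.isProbabilityMeasure_map (μ := μ) hY.aemeasurable
  refine (hdfkg.map hY monotone_columnMax fun Λ => ⟨Finset.univ ×ˢ Λ, ?_⟩).stochDom_of_zeroRun_le
    ?_ (fun n hn => ?_) hν
  · rw [preimage_columnMax_zeroOn, Finset.coe_product, Finset.coe_univ]
  · -- `columnMax` intertwines the shift of `Δ × ℤ` with the shift of `ℤ`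
    conv_rhs => rw [← htrans]
    rw [Measure.map_map (measurable_pi_lambda _ fun _ => measurable_pi_apply _) hY,
      Measure.map_map hY (measurable_pi_lambda _ fun _ => measurable_pi_apply _)]
    rfl
  · rw [Measure.map_apply hY (measurableSet_zeroOn_finset _), preimage_columnMax_zeroOn]
    convert hrun n hn using 3
    · ext; simp
    · simp [ENNReal.coe_sub]

/-- The key step (3.8) in the proof of Theorem 1.4: for a shift-invariant
downward FKG measure on `{0,1}^{Δ×ℤ}` whose columns of zeros satisfy an
exponential bound, the process of column maxima stochastically dominates the
Bernoulli product measure with density `ρ` on `{0,1}^ℤ`. -/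
theorem columnMax_dominates_bernoulli {Δ : Type*} [Fintype Δ] [Nonempty Δ]
    (μ : Measure (Δ × ℤ → Bool)) [IsProbabilityMeasure μ]
    (htrans : μ.map (fun η (p : Δ × ℤ) => η (p.1, p.2 + 1)) = μ)
    (hdfkg : DownwardFKG μ) (ρ : NNReal) (hρ₀ : 0 < ρ) (hρ₁ : ρ < 1)
    (hrun : ∀ n : ℕ, 1 ≤ n →
      μ (ZeroOn {p : Δ × ℤ | 1 ≤ p.2 ∧ p.2 ≤ (n : ℤ)}) ≤
        ((1 - ρ : NNReal) : ENNReal) ^ n) :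
    ∀ ν : Measure (ℤ → Bool), IsBernoulliProduct ρ ν →
      StochDom (μ.map (fun η => columnMax η)) ν :=
  columnMax_dominates_bernoulli_general μ htrans hdfkg ρ hrun
end
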